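/- arXiv:2512.18240 — 2 statements merged into one kernel-verified Lean document; each statement's English description precedes it below -/
import Mathlib

section
/- Let d, b, c be integers with d ≥ 9 and 3 dividing d + b + c; set ℓ = (d+b+c)/3 and M = max{0, b, c}. Assume b, c ≥ 0, ℓ ≥ b + c, and max{3, M+2} ≤ ℓ ≤ d − 3, but the inequalities max{3, M+2} ≤ ℓ − 1 ≤ d − 6 fail. Then either (ℓ = 3, b = c = 0, d = 9), or ℓ ≥ 4 and, up to swapping b and c, (d; b, c) equals (2ℓ; 2, ℓ−2), (2ℓ+1; 1, ℓ−2), or (2ℓ+2; 0, ℓ−2). -/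
theorem stmt_4 (d b c : ℤ) (hd : 9 ≤ d) (hdiv : (3:ℤ) ∣ (d + b + c))
    (ℓ : ℤ) (hℓ : ℓ = (d + b + c) / 3)
    (hb : 0 ≤ b) (hc : 0 ≤ c) (hnef : b + c ≤ ℓ)
    (h64 : max 3 (max 0 (max b c) + 2) ≤ ℓ ∧ ℓ ≤ d - 3)
    (hfail : ¬ (max 3 (max 0 (max b c) + 2) ≤ ℓ - 1 ∧ ℓ - 1 ≤ d - 6)) :
    (ℓ = 3 ∧ b = 0 ∧ c = 0 ∧ d = 9) ∨
    (4 ≤ ℓ ∧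
      ((d = 2 * ℓ ∧ ({b, c} : Multiset ℤ) = {2, ℓ - 2}) ∨
       (d = 2 * ℓ + 1 ∧ ({b, c} : Multiset ℤ) = {1, ℓ - 2}) ∨
       (d = 2 * ℓ + 2 ∧ ({b, c} : Multiset ℤ) = {0, ℓ - 2}))) := by
  have h3 : d + b + c = 3 * ℓ := by
    obtain ⟨k, hk⟩ := hdiv; omega
  set m := max 0 (max b c) with hm
  set t := max 3 (m + 2) with ht
  have hbm : b ≤ m := le_max_of_le_right (le_max_left _ _)
  have hcm : c ≤ m := le_max_of_le_right (le_max_right _ _)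
  have hmbc : m = b ∨ m = c := by
    rcases le_total b c with h | h
    · right; simp [hm, max_eq_right h, max_eq_right (hb.trans h)]
    · left; simp [hm, max_eq_left h, max_eq_right (hc.trans h)]
  have h3t : 3 ≤ t := le_max_left _ _
  have hmt : m + 2 ≤ t := le_max_right _ _
  have htv : t = 3 ∨ t = m + 2 := by
    rcases le_total 3 (m + 2) with h | h
    · right; simp [ht, max_eq_right h]
    · left; simp [ht, max_eq_left h]
  clear hℓ hm ht hdiv
  have pair : ∀ x y : ℤ, ({x, y} : Multiset ℤ) = {y, x} := fun x y => Multiset.cons_swap x y 0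
  have hlt : ℓ = t := by
    rcases hmbc with h | h <;> rcases htv with h' | h' <;> omega
  rcases htv with h' | h'
  · -- ℓ = 3 case
    refine Or.inl ⟨?_, ?_, ?_, ?_⟩ <;> omega
  · -- ℓ = m + 2 ≥ 4
    have hl4 : 4 ≤ ℓ := by rcases hmbc with h | h <;> omega
    refine Or.inr ⟨hl4, ?_⟩
    rcases hmbc with h | h
    · have hb' : b = ℓ - 2 := by omega
      have hc' : c = 0 ∨ c = 1 ∨ c = 2 := by omega
      subst hb'
      rcases hc' with h1 | h1 | h1 <;> subst h1
      · exact Or.inr (Or.inr ⟨by omega, pair _ _⟩)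
      · exact Or.inr (Or.inl ⟨by omega, pair _ _⟩)
      · exact Or.inl ⟨by omega, pair _ _⟩
    · have hc' : c = ℓ - 2 := by omega
      have hb' : b = 0 ∨ b = 1 ∨ b = 2 := by omega
      subst hc'
      rcases hb' with h1 | h1 | h1 <;> subst h1
      · exact Or.inr (Or.inr ⟨by omega, rfl⟩)
      · exact Or.inr (Or.inl ⟨by omega, rfl⟩)
      · exact Or.inl ⟨by omega, rfl⟩
end

section
/- Let d, a, b, c be integers with d ≥ 1 and 3 dividing d + a + b + c; set ℓ = (d+a+b+c)/3. If (2ℓ−3)² + 2 = (2a−1)² + (2b−1)² + (2c−1)², then max{0, a, b, c} ≤ ℓ ≤ d. -/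
private lemma odd_sq_ge_one (n : ℤ) : 1 ≤ (2 * n - 1) ^ 2 := by
  rcases le_or_gt n 0 with h | h
  · nlinarith
  · nlinarith

private lemma ell_nonneg (d a b c ℓ : ℤ) (hd : 1 ≤ d) (h3 : d + a + b + c = 3 * ℓ)
    (hRR : (2 * ℓ - 3) ^ 2 + 2 = (2 * a - 1) ^ 2 + (2 * b - 1) ^ 2 + (2 * c - 1) ^ 2) :
    0 ≤ ℓ := by
  by_contra h
  push_neg at h
  have hℓ1 : ℓ ≤ -1 := by omega
  nlinarith [sq_nonneg (2 * a - 1 + (3 - 2 * ℓ)), sq_nonneg (2 * b - 1 + (3 - 2 * ℓ)),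
    sq_nonneg (2 * c - 1 + (3 - 2 * ℓ)), sq_nonneg (2 * ℓ + 2),
    mul_nonneg (by linarith : (0:ℤ) ≤ d - 1) (by linarith : (0:ℤ) ≤ 3 - 2 * ℓ)]

private lemma le_ell (d a b c ℓ : ℤ) (hd : 1 ≤ d) (h3 : d + a + b + c = 3 * ℓ)
    (hRR : (2 * ℓ - 3) ^ 2 + 2 = (2 * a - 1) ^ 2 + (2 * b - 1) ^ 2 + (2 * c - 1) ^ 2) :
    a ≤ ℓ := by
  have h0 : 0 ≤ ℓ := ell_nonneg d a b c ℓ hd h3 hRR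
  by_contra h
  push_neg at h
  have ha : ℓ + 1 ≤ a := h
  have hA : (2 * a - 1) ^ 2 ≤ (2 * ℓ - 3) ^ 2 := by
    nlinarith [odd_sq_ge_one b, odd_sq_ge_one c]
  rcases le_or_gt 1 ℓ with hℓ | hℓ
  · -- (2a-1)² ≥ (2ℓ+1)² > (2ℓ-3)² when ℓ ≥ 1
    nlinarith [mul_nonneg (by linarith : (0:ℤ) ≤ a - ℓ - 1) (by linarith : (0:ℤ) ≤ a + ℓ)]
  · have hℓ0 : ℓ = 0 := by omega
    subst hℓ0
    -- x ≥ 1, y,z ≥ -3, x+y+z = -2d-3 ≤ -5, squares sum to 11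
    nlinarith [sq_nonneg (2 * b - 1 + 3), sq_nonneg (2 * c - 1 + 3), sq_nonneg (2 * a - 1)]

theorem stmt_5 (d a b c : ℤ) (hd : 1 ≤ d) (hdiv : (3:ℤ) ∣ (d + a + b + c))
    (ℓ : ℤ) (hℓ : ℓ = (d + a + b + c) / 3)
    (hRR : (2 * ℓ - 3) ^ 2 + 2 = (2 * a - 1) ^ 2 + (2 * b - 1) ^ 2 + (2 * c - 1) ^ 2) :
    max 0 (max a (max b c)) ≤ ℓ ∧ ℓ ≤ d := by
  have h3 : d + a + b + c = 3 * ℓ := by omega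
  have h0 : 0 ≤ ℓ := ell_nonneg d a b c ℓ hd h3 hRR
  have ha : a ≤ ℓ := le_ell d a b c ℓ hd h3 hRR
  have hb : b ≤ ℓ := le_ell d b a c ℓ hd (by linarith) (by linarith)
  have hc : c ≤ ℓ := le_ell d c b a ℓ hd (by linarith) (by linarith)
  have hdd : ℓ ≤ d := by
    by_contra h
    push_neg at h
    have hdl : d ≤ ℓ - 1 := by omega
    -- Σx = 6ℓ-2d-3 ∈ [4ℓ-1, 6ℓ-5], so ℓ ≥ 2
    have hℓ2 : 2 ≤ ℓ := by omega
    have hcs : (2*a-1 + (2*b-1) + (2*c-1))^2 ≤ 3 * ((2*ℓ-3)^2 + 2) := by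
      nlinarith [sq_nonneg (2*a - 2*b), sq_nonneg (2*b - 2*c), sq_nonneg (2*a - 2*c)]
    have hsum : 4*ℓ - 1 ≤ 2*a-1 + (2*b-1) + (2*c-1) := by omega
    nlinarith [mul_le_mul hsum hsum (by linarith) (by linarith),
      mul_nonneg (by linarith : (0:ℤ) ≤ ℓ - 2) (by linarith : (0:ℤ) ≤ ℓ)]
  exact ⟨by simp only [max_le_iff]; exact ⟨h0, ha, hb, hc⟩, hdd⟩
end
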